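/- arXiv:1805.00575 — 2 statements merged into one kernel-verified Lean document; each statement's English description precedes it below -/
import Mathlib

section
/- For a virtual graph G with no coloops, the S-polynomial S_G(Q) is a monic polynomial in Q of degree exactly b_1(G) − g(G); in general, deg S_G(Q) ≤ b_1(G) − g(G). -/
/-!
Faces of `G − D` are the cycles of the boundary walk `rot ∘ ε_D`, where `ε_D` pairs the two
half-edges of each kept edge. Deleting one more edge `e = {a, ε a}` multiplies this permutation
by the transposition `(a ε a)`, which splits a cycle if `a` and `ε a` lie on a common face (`e` is
a coloop of `G − D`) and joins two cycles otherwise. By Euler's relation the exponent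
`b₁ − g = (|E| − |V| + #faces) / 2` therefore drops by one when a non-coloop is deleted and stays
put when a coloop is; it vanishes once all edges are deleted. Hence the exponents are non-negative
and bounded by that of the empty state, and without coloops every nonempty state lies strictly
below it, so the empty state alone contributes the leading term `Q^(b₁ − g)`.
-/

open Polynomial

noncomputable section
open scoped Classical

/-- A ribbon graph (combinatorial map), given by a finite set of half-edges
together with a fixed-point-free involution `edgePair` (pairing the two half-edges
of each edge) and a rotation permutation `rot` whose cycles are the vertices with
their counterclockwise rotation system. -/
structure RibbonGraph where
  H : Type
  fintypeH : Fintype H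
  decH : DecidableEq H
  edgePair : Equiv.Perm H
  rot : Equiv.Perm H
  edgePair_invol : ∀ h, edgePair (edgePair h) = h
  edgePair_nofix : ∀ h, edgePair h ≠ h

namespace RibbonGraph

variable (G : RibbonGraph)

instance : Fintype G.H := G.fintypeH
instance : DecidableEq G.H := G.decH

/-- Edges are the orbits of the involution `edgePair`. -/
def edgeSetoid : Setoid G.H :=
  ⟨G.edgePair.SameCycle, ⟨fun _ => Equiv.Perm.SameCycle.refl _ _,
    fun h => h.symm, fun h h' => h.trans h'⟩⟩

def EdgeSet := Quotient G.edgeSetoid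

instance : Finite G.EdgeSet := Quotient.finite _
instance : Fintype G.EdgeSet := Fintype.ofFinite _

def edgeOf (h : G.H) : G.EdgeSet := Quotient.mk G.edgeSetoid h

/-- Vertices are the orbits of the rotation `rot`. -/
def vertexSetoid : Setoid G.H :=
  ⟨G.rot.SameCycle, ⟨fun _ => Equiv.Perm.SameCycle.refl _ _,
    fun h => h.symm, fun h h' => h.trans h'⟩⟩

def VertexSet := Quotient G.vertexSetoid

instance : Finite G.VertexSet := Quotient.finite _
instance : Fintype G.VertexSet := Fintype.ofFinite _

def vertexOf (h : G.H) : G.VertexSet := Quotient.mk G.vertexSetoid h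

def numVertices : ℕ := Nat.card G.VertexSet
def numEdges : ℕ := Nat.card G.EdgeSet

/-- One step of the connectivity relation of `G − D` (`D` a set of deleted edges):
half-edges at a common vertex are connected, as are the two halves of a kept edge.
Vertices all of whose half-edges are deleted remain as isolated components. -/
def connStep (D : Finset G.EdgeSet) (x y : G.H) : Prop :=
  G.rot.SameCycle x y ∨ (G.edgeOf x ∉ D ∧ y = G.edgePair x)

/-- `b₀(G − D)`: number of connected components of the deletion `G − D`. -/
def b0Del (D : Finset G.EdgeSet) : ℕ :=
  Nat.card (Quotient (Setoid.mk _ (Relation.EqvGen.is_equivalence (G.connStep D))))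

def numEdgesDel (D : Finset G.EdgeSet) : ℕ := G.numEdges - D.card

/-- `b₁(G − D)`: the cycle rank `|E| − |V| + b₀` of the deletion. -/
def b1Del (D : Finset G.EdgeSet) : ℤ :=
  (G.numEdgesDel D : ℤ) - (G.numVertices : ℤ) + (G.b0Del D : ℤ)

/-- One step of the face (boundary-walk) relation of `G − D`: from a kept half-edge `x`,
go to its partner and then rotate, skipping deleted half-edges. Its equivalence classes
through kept half-edges are the boundary components of `G − D`. -/
def faceStep (D : Finset G.EdgeSet) (x y : G.H) : Prop :=
  G.edgeOf x ∉ D ∧ G.edgeOf y ∉ D ∧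
    ∃ m : ℕ, 0 < m ∧ y = (G.rot ^ m) (G.edgePair x) ∧
      ∀ j, 0 < j → j < m → G.edgeOf ((G.rot ^ j) (G.edgePair x)) ∈ D

def faceSetoid (D : Finset G.EdgeSet) : Setoid G.H :=
  Setoid.mk _ (Relation.EqvGen.is_equivalence (G.faceStep D))

/-- The number of boundary components (faces) of the ribbon graph `G − D`:
face-classes of kept half-edges, plus one circle for each fully deleted vertex. -/
def facesDel (D : Finset G.EdgeSet) : ℕ :=
  Nat.card {c : Quotient (G.faceSetoid D) // ∃ h, G.edgeOf h ∉ D ∧ Quotient.mk (G.faceSetoid D) h = c}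
    + Nat.card {v : G.VertexSet // ∀ h, G.vertexOf h = v → G.edgeOf h ∈ D}

/-- The genus of `G − D`, via the Euler characteristic relation
`|V| − |E| + f = 2b₀ − 2g`, i.e. `2g = b₁ − f + b₀`. -/
def genusDel (D : Finset G.EdgeSet) : ℤ :=
  (G.b1Del D - (G.facesDel D : ℤ) + (G.b0Del D : ℤ)) / 2

/-- The `S`-polynomial state sum `S_G(Q) = Σ_{T⊆E} (−1)^{|T|} Q^{b₁(G−T) − g(G−T)}`. -/
def SPoly : Polynomial ℚ :=
  ∑ D : Finset G.EdgeSet, (-1 : Polynomial ℚ) ^ D.card * X ^ (G.b1Del D - G.genusDel D).toNat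

/-- The flow polynomial state sum `F_G(Q) = Σ_{T⊆E} (−1)^{|T|} Q^{b₁(G−T)}`
of the underlying graph. -/
def FPoly : Polynomial ℚ :=
  ∑ D : Finset G.EdgeSet, (-1 : Polynomial ℚ) ^ D.card * X ^ (G.b1Del D).toNat

/-- A bridge: an edge whose deletion increases the number of connected components. -/
def IsBridge (e : G.EdgeSet) : Prop := G.b0Del ∅ < G.b0Del {e}

/-- `e` is a coloop of the deletion `G − D`: the two boundary components of `G − D`
adjacent to (parallel to) the edge `e` coincide. -/
def IsColoopIn (D : Finset G.EdgeSet) (e : G.EdgeSet) : Prop :=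
  e ∉ D ∧ ∃ a, G.edgeOf a = e ∧ Relation.EqvGen (G.faceStep D) a (G.edgePair a)

/-- A coloop of `G`: the two boundary components adjacent to the edge coincide
(equivalently, the dual edge is a loop of the dual graph). -/
def IsColoop (e : G.EdgeSet) : Prop := G.IsColoopIn ∅ e

/-- Degree of the vertex containing the half-edge `h`: the length of its rotation cycle. -/
def vertexDegree (h : G.H) : ℕ := Nat.card {x : G.H // G.rot.SameCycle h x}

/-- Degree of a vertex: the number of half-edges incident to it. -/
def vDeg (v : G.VertexSet) : ℕ := Nat.card {h : G.H // G.vertexOf h = v}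

end RibbonGraph

namespace Setoid

variable {α : Type*}

def mergeClasses (s : Setoid α) (a b : α) : Setoid α where
  r x y := s x y ∨ ((s x a ∨ s x b) ∧ (s y a ∨ s y b))
  iseqv := by
    have hP {x y} (hxy : s x y) : s x a ∨ s x b → s y a ∨ s y b :=
      Or.imp (s.trans' (s.symm' hxy)) (s.trans' (s.symm' hxy))
    refine ⟨fun x => Or.inl (s.refl' x), fun h => h.imp s.symm' And.symm, ?_⟩
    rintro x y z (hxy | ⟨hx, hy⟩) (hyz | ⟨hy', hz⟩)
    · exact Or.inl (s.trans' hxy hyz)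
    · exact Or.inr ⟨hP (s.symm' hxy) hy', hz⟩
    · exact Or.inr ⟨hx, hP hyz hy⟩
    · exact Or.inr ⟨hx, hz⟩

theorem card_quotient_mergeClasses_add_one [Finite α] (s : Setoid α) {a b : α}
    (hab : ¬ s a b) : Nat.card (Quotient (s.mergeClasses a b)) + 1 = Nat.card (Quotient s) := by
  let f (c : {c : Quotient s // c ≠ ⟦b⟧}) : Quotient (s.mergeClasses a b) :=
    Quotient.map' id (fun _ _ => Or.inl) c.1
  have hf : Function.Bijective f := by
    constructor
    · rintro ⟨⟨x⟩, hx⟩ ⟨⟨y⟩, hy⟩ h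
      have hxb : ¬ s x b := fun h => hx (Quotient.sound h)
      have hyb : ¬ s y b := fun h => hy (Quotient.sound h)
      rcases Quotient.exact h with hxy | ⟨hxa, hya⟩
      · exact Subtype.ext (Quotient.sound hxy)
      · exact Subtype.ext (Quotient.sound
          (s.trans' (hxa.resolve_right hxb) (s.symm' (hya.resolve_right hyb))))
    · rintro ⟨x⟩
      by_cases hxb : s x b
      · exact ⟨⟨⟦a⟧, fun h => hab (Quotient.exact h)⟩,
          Quotient.sound (Or.inr ⟨Or.inl (s.refl' a), Or.inr hxb⟩)⟩
      · exact ⟨⟨⟦x⟧, fun h => hxb (Quotient.exact h)⟩, rfl⟩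
  rw [← Nat.card_congr (Equiv.ofBijective f hf), ← Finite.card_option,
    Nat.card_congr (Equiv.optionSubtypeNe _)]

theorem card_classes_meeting_eq {s t : Setoid α} {p : α → Prop}
    (h : ∀ x y, p x → p y → (s x y ↔ t x y)) :
    Nat.card {c : Quotient s // ∃ x, p x ∧ ⟦x⟧ = c} =
      Nat.card {c : Quotient t // ∃ x, p x ∧ ⟦x⟧ = c} := by
  have hcomap (r : Setoid α) : Nat.card {c : Quotient r // ∃ x, p x ∧ ⟦x⟧ = c} =
      Nat.card (Quotient (r.comap (Subtype.val : {x // p x} → α))) :=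
    Nat.card_congr ((comapQuotientEquiv _ r).trans
      (Equiv.subtypeEquivRight fun c => by simp [Quotient.mk''_eq_mk])).symm
  rw [hcomap, hcomap, Setoid.ext (s := s.comap Subtype.val) (t := t.comap Subtype.val)
    fun x y => h x y x.2 y.2]

theorem card_classes_subset_eq_card_classes_meeting (r : Setoid α) (S : Set α) :
    Nat.card {c : Quotient r // ∀ x, ⟦x⟧ = c → x ∈ S} =
      Nat.card {c : Quotient r // ∃ x, (∀ y, r x y → y ∈ S) ∧ ⟦x⟧ = c} := by
  refine Nat.card_congr (Equiv.subtypeEquivRight fun c => ?_)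
  induction c using Quotient.inductionOn with | h x => ?_
  simp only [Quotient.eq]
  exact ⟨fun h => ⟨x, fun y hy => h y (r.symm' hy), r.refl' x⟩,
    fun ⟨x', hx', hx'x⟩ y hy => hx' y (r.trans' hx'x (r.symm' hy))⟩

end Setoid

namespace Equiv.Perm

variable {α : Type*} {f g : Perm α} {a b x y : α}

/-- Fixed points count as cycles of length one. -/
def numCycles (f : Perm α) : ℕ := Nat.card (Quotient (SameCycle.setoid f))

theorem pow_apply_eq_pow_apply_of_eqOn {s : Set α} (hfg : Set.EqOn f g s) {n : ℕ}
    (hs : ∀ i < n, (f ^ i) x ∈ s) : (f ^ n) x = (g ^ n) x := by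
  induction n with
  | zero => rfl
  | succ n ih =>
    rw [pow_succ', pow_succ', mul_apply, mul_apply, hfg (hs n n.lt_succ_self),
      ih fun i hi => hs i (by omega)]

theorem forall_pow_apply_mem_iff_of_eqOn {s : Set α} (hfg : Set.EqOn f g s) {n : ℕ} :
    (∀ i < n, (f ^ i) x ∈ s) ↔ ∀ i < n, (g ^ i) x ∈ s := by
  constructor <;> intro hs i hi
  · rw [← pow_apply_eq_pow_apply_of_eqOn hfg fun j hj => hs j (by omega)]
    exact hs i hi
  · rw [← pow_apply_eq_pow_apply_of_eqOn hfg.symm fun j hj => hs j (by omega)]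
    exact hs i hi

theorem SameCycle.mem_of_mapsTo [Finite α] {s : Set α} (hs : Set.MapsTo f s s) (hx : x ∈ s)
    (h : f.SameCycle x y) : y ∈ s := by
  obtain ⟨n, rfl⟩ := h.exists_nat_pow_eq
  exact hs.perm_pow n hx

theorem sameCycle_setoid_le [Finite α] {s : Setoid α} (h : ∀ x, s x (f x)) :
    SameCycle.setoid f ≤ s :=
  fun {x _} hxy => hxy.mem_of_mapsTo (s := {z | s x z}) (fun z hz => s.trans' hz (h z))
    (s.refl' x)

theorem sameCycle_iff_of_eqOn [Finite α] {s : Set α} (hfg : Set.EqOn f g s)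
    (hx : ∀ y, f.SameCycle x y → y ∈ s) : f.SameCycle x y ↔ g.SameCycle x y := by
  have hpow (n : ℕ) : (f ^ n) x = (g ^ n) x :=
    pow_apply_eq_pow_apply_of_eqOn hfg fun i _ => hx _ (sameCycle_pow_right.2 .rfl)
  constructor <;> intro h <;> obtain ⟨n, rfl⟩ := h.exists_nat_pow_eq
  · rw [hpow]; exact sameCycle_pow_right.2 .rfl
  · rw [← hpow]; exact sameCycle_pow_right.2 .rfl

theorem SameCycle.exists_pow_lt_of_pow_apply_eq_self [Finite α] {k : ℕ} (hk : 0 < k)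
    (hx : (f ^ k) x = x) (h : f.SameCycle x y) : ∃ j < k, (f ^ j) x = y := by
  obtain ⟨n, rfl⟩ := h.exists_nat_pow_eq
  have hper : Function.IsPeriodicPt f k x := by
    rwa [Function.IsPeriodicPt, Function.IsFixedPt, ← coe_pow]
  exact ⟨n % k, Nat.mod_lt n hk, by rw [coe_pow, coe_pow, hper.iterate_mod_apply]⟩

theorem card_cycles_subset_eq_of_eqOn [Finite α] {s : Set α} (hfg : Set.EqOn f g s) :
    Nat.card {c : Quotient (SameCycle.setoid f) // ∀ x, ⟦x⟧ = c → x ∈ s} =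
      Nat.card {c : Quotient (SameCycle.setoid g) // ∀ x, ⟦x⟧ = c → x ∈ s} := by
  have hiff {x y : α} (hx : ∀ z, f.SameCycle x z → z ∈ s) :
      f.SameCycle x y ↔ g.SameCycle x y :=
    sameCycle_iff_of_eqOn hfg hx
  rw [Setoid.card_classes_subset_eq_card_classes_meeting,
    Setoid.card_classes_subset_eq_card_classes_meeting]
  refine (Setoid.card_classes_meeting_eq fun x y hx _ => hiff hx).trans
    (Nat.card_congr (Equiv.subtypeEquivRight fun c => exists_congr fun x => and_congr_left' ?_))
  exact ⟨fun hx y hy => hx y ((hiff hx).2 hy),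
    fun hx y hy => hx y ((sameCycle_iff_of_eqOn hfg.symm hx).2 hy)⟩

variable [DecidableEq α]

theorem mul_swap_pow_apply_right {k : ℕ}
    (hk : ∀ i, 0 < i → i < k → (f ^ i) a ≠ a ∧ (f ^ i) a ≠ b) {j : ℕ} (hj : 0 < j)
    (hjk : j ≤ k) : ((f * swap a b) ^ j) b = (f ^ j) a := by
  induction j with
  | zero => omega
  | succ j ih =>
    rcases Nat.eq_zero_or_pos j with rfl | hj
    · simp
    · obtain ⟨ha, hb⟩ := hk j hj (by omega)
      rw [pow_succ' (f * swap a b), mul_apply, ih hj (by omega), mul_apply,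
        swap_apply_of_ne_of_ne ha hb, pow_succ' f, mul_apply]

theorem sameCycle_mul_swap_iff [Finite α] (hab : a ≠ b) :
    (f * swap a b).SameCycle a b ↔ ¬ f.SameCycle a b := by
  -- `k` is the first time the `f`-orbit of `a` returns to `a` or reaches `b`
  have hex : ∃ k, 0 < k ∧ ((f ^ k) a = a ∨ (f ^ k) a = b) :=
    ⟨orderOf f, orderOf_pos f, Or.inl (by rw [pow_orderOf_eq_one]; rfl)⟩
  obtain ⟨hk, hka | hkb⟩ := Nat.find_spec hex
  all_goals
    have hmin : ∀ i, 0 < i → i < Nat.find hex → (f ^ i) a ≠ a ∧ (f ^ i) a ≠ b :=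
      fun i hi hik => not_or.1 fun h => Nat.find_min hex hik ⟨hi, h⟩
  · have hnot : ¬ f.SameCycle a b := fun h => by
      obtain ⟨j, hjk, hj⟩ := h.exists_pow_lt_of_pow_apply_eq_self hk hka
      rcases Nat.eq_zero_or_pos j with rfl | hj0
      · exact hab hj
      · exact (hmin j hj0 hjk).2 hj
    refine iff_of_true (SameCycle.symm ⟨Nat.find hex, ?_⟩) hnot
    rw [zpow_natCast, mul_swap_pow_apply_right hmin hk le_rfl, hka]
  · refine iff_of_false (fun h => ?_) (not_not.2 ⟨Nat.find hex, by rwa [zpow_natCast]⟩)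
    have hper : ((f * swap a b) ^ Nat.find hex) b = b := by
      rw [mul_swap_pow_apply_right hmin hk le_rfl, hkb]
    obtain ⟨j, hjk, hj⟩ := h.symm.exists_pow_lt_of_pow_apply_eq_self hk hper
    rcases Nat.eq_zero_or_pos j with rfl | hj0
    · exact hab hj.symm
    · exact (hmin j hj0 hjk).1 (by rwa [← mul_swap_pow_apply_right hmin hj0 hjk.le])

theorem numCycles_mul_swap_add_one [Finite α] (hab : a ≠ b) (h : ¬ f.SameCycle a b) :
    (f * swap a b).numCycles + 1 = f.numCycles := by
  have hswap := (sameCycle_mul_swap_iff (f := f) hab).2 h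
  suffices SameCycle.setoid (f * swap a b) = (SameCycle.setoid f).mergeClasses a b by
    rw [numCycles, this]
    exact (SameCycle.setoid f).card_quotient_mergeClasses_add_one h
  refine le_antisymm (sameCycle_setoid_le fun x => ?_) fun x y hxy => ?_
  · rw [mul_apply]
    rcases eq_or_ne x a with rfl | hxa
    · rw [swap_apply_left]
      exact Or.inr ⟨Or.inl .rfl, Or.inr (sameCycle_apply_left.2 .rfl)⟩
    rcases eq_or_ne x b with rfl | hxb
    · rw [swap_apply_right]
      exact Or.inr ⟨Or.inr .rfl, Or.inl (sameCycle_apply_left.2 .rfl)⟩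
    · rw [swap_apply_of_ne_of_ne hxa hxb]
      exact Or.inl (sameCycle_apply_right.2 .rfl)
  have hle : SameCycle.setoid f ≤ SameCycle.setoid (f * swap a b) :=
    sameCycle_setoid_le fun x => by
      have hfx : f x = (f * swap a b) (swap a b x) := by rw [mul_apply, swap_apply_self]
      change (f * swap a b).SameCycle x (f x)
      rw [hfx, sameCycle_apply_right]
      rcases eq_or_ne x a with rfl | hxa
      · rw [swap_apply_left]; exact hswap
      rcases eq_or_ne x b with rfl | hxb
      · rw [swap_apply_right]; exact hswap.symm
      · rw [swap_apply_of_ne_of_ne hxa hxb]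
  rcases hxy with hxy | ⟨hx, hy⟩
  · exact hle hxy
  · have hP (z : α) (hz : f.SameCycle z a ∨ f.SameCycle z b) : (f * swap a b).SameCycle z a :=
      hz.elim (fun h => hle h) fun h => (hle h).trans hswap.symm
    exact (hP x hx).trans (hP y hy).symm

theorem numCycles_mul_swap_of_sameCycle [Finite α] (hab : a ≠ b) (h : f.SameCycle a b) :
    (f * swap a b).numCycles = f.numCycles + 1 := by
  have := numCycles_mul_swap_add_one (f := f * swap a b) hab
    ((sameCycle_mul_swap_iff hab).not.2 (not_not.2 h))
  rw [mul_swap_mul_self] at this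
  omega

end Equiv.Perm

namespace Polynomial

variable {R ι : Type*} [Ring R]

theorem degree_neg_one_pow_mul_X_pow_le (k m : ℕ) :
    ((-1 : R[X]) ^ k * X ^ m).degree ≤ (m : WithBot ℕ) := by
  rcases neg_one_pow_eq_or R[X] k with h | h <;> simp [h, degree_X_pow_le]

theorem degree_sum_neg_one_pow_mul_X_pow_le (s : Finset ι) (k d : ι → ℕ) {m : ℕ}
    (h : ∀ i ∈ s, d i ≤ m) :
    (∑ i ∈ s, (-1 : R[X]) ^ k i * X ^ d i).degree ≤ (m : WithBot ℕ) :=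
  (degree_sum_le _ _).trans <| Finset.sup_le fun i hi =>
    (degree_neg_one_pow_mul_X_pow_le _ _).trans (WithBot.coe_le_coe.2 (h i hi))

theorem degree_sum_neg_one_pow_mul_X_pow_lt (s : Finset ι) (k d : ι → ℕ) {m : ℕ}
    (h : ∀ i ∈ s, d i < m) :
    (∑ i ∈ s, (-1 : R[X]) ^ k i * X ^ d i).degree < (m : WithBot ℕ) :=
  (degree_sum_le _ _).trans_lt <| (Finset.sup_lt_iff (WithBot.bot_lt_coe m)).2 fun i hi =>
    (degree_neg_one_pow_mul_X_pow_le _ _).trans_lt (WithBot.coe_lt_coe.2 (h i hi))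

end Polynomial

namespace RibbonGraph

open Equiv Equiv.Perm

variable (G : RibbonGraph) {D : Finset G.EdgeSet} {e : G.EdgeSet} {a x y : G.H}

theorem edgeOf_edgePair (x : G.H) : G.edgeOf (G.edgePair x) = G.edgeOf x :=
  Quotient.sound (⟨1, by simpa using G.edgePair_invol x⟩ : G.edgePair.SameCycle _ x)

theorem eq_or_eq_edgePair_of_edgeOf_eq (h : G.edgeOf x = G.edgeOf a) :
    x = a ∨ x = G.edgePair a := by
  have hper : (G.edgePair ^ 2) a = a := by rw [sq, mul_apply, G.edgePair_invol]
  obtain ⟨j, hj, rfl⟩ :=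
    (Quotient.exact h : G.edgePair.SameCycle x a).symm.exists_pow_lt_of_pow_apply_eq_self
      two_pos hper
  interval_cases j <;> simp

def edgePairDel (D : Finset G.EdgeSet) : Perm G.H :=
  Function.Involutive.toPerm (fun x => if G.edgeOf x ∈ D then x else G.edgePair x) fun x => by
    by_cases hx : G.edgeOf x ∈ D <;> simp [hx, edgeOf_edgePair, G.edgePair_invol]

/-- The boundary walk of `G − D`: its cycles are the faces of `G − D`. -/
def facePerm (D : Finset G.EdgeSet) : Perm G.H := G.rot * G.edgePairDel D

variable {G}

theorem edgePairDel_apply : G.edgePairDel D x = if G.edgeOf x ∈ D then x else G.edgePair x :=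
  rfl

theorem facePerm_apply_of_mem (hx : G.edgeOf x ∈ D) : G.facePerm D x = G.rot x := by
  rw [facePerm, mul_apply, edgePairDel_apply, if_pos hx]

theorem facePerm_apply_of_notMem (hx : G.edgeOf x ∉ D) :
    G.facePerm D x = G.rot (G.edgePair x) := by
  rw [facePerm, mul_apply, edgePairDel_apply, if_neg hx]

theorem eqOn_facePerm_rot : Set.EqOn (G.facePerm D) G.rot {x | G.edgeOf x ∈ D} :=
  fun _ hx => facePerm_apply_of_mem hx

theorem faceStep_iff : G.faceStep D x y ↔ G.edgeOf x ∉ D ∧ G.edgeOf y ∉ D ∧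
    ∃ n, (G.facePerm D ^ n) (G.facePerm D x) = y ∧
      ∀ i < n, G.edgeOf ((G.facePerm D ^ i) (G.facePerm D x)) ∈ D := by
  refine and_congr_right fun hx => and_congr_right fun _ => ?_
  rw [facePerm_apply_of_notMem hx]
  set z := G.rot (G.edgePair x)
  have hrot : (∃ m, 0 < m ∧ y = (G.rot ^ m) (G.edgePair x) ∧
      ∀ j, 0 < j → j < m → G.edgeOf ((G.rot ^ j) (G.edgePair x)) ∈ D) ↔
      ∃ n, (G.rot ^ n) z = y ∧ ∀ i < n, G.edgeOf ((G.rot ^ i) z) ∈ D := by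
    constructor
    · rintro ⟨m, hm, rfl, hdel⟩
      obtain ⟨n, rfl⟩ : ∃ n, m = n + 1 := ⟨m - 1, by omega⟩
      refine ⟨n, by rw [pow_succ, mul_apply], fun i hi => ?_⟩
      simpa [pow_succ, mul_apply] using hdel (i + 1) i.succ_pos (by omega)
    · rintro ⟨n, rfl, hdel⟩
      refine ⟨n + 1, n.succ_pos, by rw [pow_succ, mul_apply], fun j hj hjn => ?_⟩
      obtain ⟨i, rfl⟩ : ∃ i, j = i + 1 := ⟨j - 1, by omega⟩
      simpa [pow_succ, mul_apply] using hdel i (by omega)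
  rw [hrot]
  refine exists_congr fun n => ⟨fun ⟨hy, hdel⟩ => ?_, fun ⟨hy, hdel⟩ => ?_⟩
  · have hdel' := (forall_pow_apply_mem_iff_of_eqOn eqOn_facePerm_rot).2 hdel
    exact ⟨(pow_apply_eq_pow_apply_of_eqOn eqOn_facePerm_rot hdel').trans hy, hdel'⟩
  · exact ⟨(pow_apply_eq_pow_apply_of_eqOn eqOn_facePerm_rot hdel).symm.trans hy,
      (forall_pow_apply_mem_iff_of_eqOn eqOn_facePerm_rot).1 hdel⟩

theorem sameCycle_facePerm_of_faceStep (h : G.faceStep D x y) :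
    (G.facePerm D).SameCycle x y := by
  obtain ⟨-, -, n, rfl, -⟩ := faceStep_iff.1 h
  exact sameCycle_pow_right.2 (sameCycle_apply_right.2 .rfl)

theorem eqvGen_faceStep_of_sameCycle (hx : G.edgeOf x ∉ D) (hy : G.edgeOf y ∉ D)
    (h : (G.facePerm D).SameCycle x y) : Relation.EqvGen (G.faceStep D) x y := by
  obtain ⟨N, rfl⟩ := h.exists_nat_pow_eq
  clear h
  induction N using Nat.strong_induction_on with
  | _ N ih =>
  rcases Nat.eq_zero_or_pos N with rfl | hN
  · exact .refl x
  let kept (i : ℕ) : Prop := G.edgeOf ((G.facePerm D ^ i) x) ∉ D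
  -- the last kept half-edge the walk visits before time `N` is face-related to `x` by induction,
  -- and one face step leads from it to `(facePerm D ^ N) x`
  let i := Nat.findGreatest kept (N - 1)
  have hi : i ≤ N - 1 := Nat.findGreatest_le _
  have hkept : kept i := Nat.findGreatest_spec (P := kept) (Nat.zero_le _) hx
  have hshift (j : ℕ) : (G.facePerm D ^ j) (G.facePerm D ((G.facePerm D ^ i) x)) =
      (G.facePerm D ^ (j + 1 + i)) x := by
    rw [← mul_apply, ← pow_succ, ← mul_apply, ← pow_add]
  refine (ih i (by omega) hkept).trans _ _ _
    (.rel _ _ (faceStep_iff.2 ⟨hkept, hy, N - 1 - i, ?_, fun j hj => ?_⟩))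
  · rw [hshift]; congr 2; omega
  · rw [hshift]
    exact not_not.1 (Nat.findGreatest_is_greatest (P := kept) (n := N - 1) (by omega)
      (by omega))

theorem eqvGen_faceStep_iff (hx : G.edgeOf x ∉ D) (hy : G.edgeOf y ∉ D) :
    Relation.EqvGen (G.faceStep D) x y ↔ (G.facePerm D).SameCycle x y :=
  ⟨fun h => (SameCycle.equivalence _).eqvGen_iff.1
    (Relation.EqvGen.mono (fun _ _ => sameCycle_facePerm_of_faceStep) _ _ h),
    eqvGen_faceStep_of_sameCycle hx hy⟩

variable (G) in
theorem facesDel_eq_numCycles (D : Finset G.EdgeSet) :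
    G.facesDel D = (G.facePerm D).numCycles := by
  have hsplit := Nat.card_congr <| Equiv.sumCompl
    fun c : Quotient (SameCycle.setoid (G.facePerm D)) => ∃ x, G.edgeOf x ∉ D ∧ ⟦x⟧ = c
  rw [Nat.card_sum] at hsplit
  rw [numCycles, ← hsplit, facesDel]
  congr 1
  · exact Setoid.card_classes_meeting_eq fun x y hx hy => eqvGen_faceStep_iff hx hy
  · refine (card_cycles_subset_eq_of_eqOn (s := {x | G.edgeOf x ∈ D})
      eqOn_facePerm_rot.symm).trans (Nat.card_congr (Equiv.subtypeEquivRight fun c => ?_))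
    simp only [Set.mem_ofPred_eq, not_exists, not_and, not_imp_not]

theorem edgePairDel_insert (he : e ∉ D) (ha : G.edgeOf a = e) :
    G.edgePairDel (insert e D) = G.edgePairDel D * swap a (G.edgePair a) := by
  have hb : G.edgeOf (G.edgePair a) = e := (G.edgeOf_edgePair a).trans ha
  ext x
  rw [mul_apply]
  rcases eq_or_ne x a with rfl | hxa
  · simp [edgePairDel_apply, ha, hb, he, G.edgePair_invol]
  rcases eq_or_ne x (G.edgePair a) with rfl | hxb
  · simp [edgePairDel_apply, ha, hb, he]
  · have hxe : G.edgeOf x ≠ e := fun h =>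
      (G.eq_or_eq_edgePair_of_edgeOf_eq (h.trans ha.symm)).elim hxa hxb
    simp [edgePairDel_apply, swap_apply_of_ne_of_ne hxa hxb, hxe]

theorem facePerm_insert (he : e ∉ D) (ha : G.edgeOf a = e) :
    G.facePerm (insert e D) = G.facePerm D * swap a (G.edgePair a) := by
  rw [facePerm, facePerm, edgePairDel_insert he ha, mul_assoc]

theorem facesDel_insert_of_isColoopIn (hc : G.IsColoopIn D e) :
    G.facesDel (insert e D) = G.facesDel D + 1 := by
  obtain ⟨he, a, rfl, ha⟩ := hc
  rw [facesDel_eq_numCycles, facesDel_eq_numCycles, facePerm_insert he rfl]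
  refine numCycles_mul_swap_of_sameCycle (G.edgePair_nofix a).symm
    ((eqvGen_faceStep_iff he ?_).1 ha)
  rwa [edgeOf_edgePair]

theorem facesDel_insert_add_one (he : e ∉ D) (hc : ¬ G.IsColoopIn D e) :
    G.facesDel (insert e D) + 1 = G.facesDel D := by
  obtain ⟨a, rfl⟩ := Quotient.exists_rep e
  have hb : G.edgeOf (G.edgePair a) ∉ D := by rwa [edgeOf_edgePair]
  rw [facesDel_eq_numCycles, facesDel_eq_numCycles, facePerm_insert he rfl]
  exact numCycles_mul_swap_add_one (G.edgePair_nofix a).symm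
    fun h => hc ⟨he, a, rfl, (eqvGen_faceStep_iff he hb).2 h⟩

variable (G) in
theorem facesDel_univ : G.facesDel Finset.univ = G.numVertices := by
  have hpair : G.edgePairDel Finset.univ = 1 := by
    ext x
    simp [edgePairDel_apply]
  rw [facesDel_eq_numCycles, facePerm, hpair, mul_one]
  rfl

theorem numEdgesDel_insert (he : e ∉ D) : G.numEdgesDel (insert e D) + 1 = G.numEdgesDel D := by
  have hcard : (insert e D).card ≤ G.numEdges := by
    rw [numEdges, Nat.card_eq_fintype_card]
    exact Finset.card_le_univ _
  rw [numEdgesDel, numEdgesDel, Finset.card_insert_of_notMem he] at *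
  omega

variable (G) in
theorem numEdgesDel_univ : G.numEdgesDel Finset.univ = 0 := by
  rw [numEdgesDel, numEdges, Nat.card_eq_fintype_card, Finset.card_univ, Nat.sub_self]

variable (G) in
theorem even_facesDel_add_numEdgesDel (D : Finset G.EdgeSet) :
    Even (G.facesDel D + G.numEdgesDel D + G.numVertices) := by
  -- deleting an edge changes both counts by one, so the parity of their sum does not depend on `D`
  have hconst (D : Finset G.EdgeSet) :
      (G.facesDel D + G.numEdgesDel D) % 2 = (G.facesDel ∅ + G.numEdgesDel ∅) % 2 := by
    induction D using Finset.induction_on with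
    | empty => rfl
    | insert e D he ih =>
      rw [← ih]
      have hE := numEdgesDel_insert he
      by_cases hc : G.IsColoopIn D e
      · have hF := facesDel_insert_of_isColoopIn hc
        omega
      · have hF := facesDel_insert_add_one he hc
        omega
  have huniv := hconst Finset.univ
  rw [facesDel_univ, numEdgesDel_univ] at huniv
  rw [Nat.even_iff]
  have := hconst D
  omega

variable (G)

/-- The exponent of `Q` in the term of `S_G(Q)` indexed by `D`. -/
def sExp (D : Finset G.EdgeSet) : ℤ := G.b1Del D - G.genusDel D

theorem two_mul_sExp (D : Finset G.EdgeSet) :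
    2 * G.sExp D = (G.numEdgesDel D : ℤ) - G.numVertices + G.facesDel D := by
  obtain ⟨r, hr⟩ := G.even_facesDel_add_numEdgesDel D
  have hr' : (G.facesDel D : ℤ) + G.numEdgesDel D + G.numVertices = r + r := by exact_mod_cast hr
  rw [sExp, genusDel, b1Del]
  omega

theorem sExp_antitone : Antitone G.sExp := by
  refine Finset.antitone_iff_forall_cons_le.2 fun D e he => ?_
  have h := G.two_mul_sExp D
  have h' := G.two_mul_sExp (Finset.cons e D he)
  have hE := numEdgesDel_insert he
  rw [Finset.cons_eq_insert] at h' ⊢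
  by_cases hc : G.IsColoopIn D e
  · have hF := facesDel_insert_of_isColoopIn hc
    omega
  · have hF := facesDel_insert_add_one he hc
    omega

theorem sExp_insert_of_not_isColoopIn (he : e ∉ D) (hc : ¬ G.IsColoopIn D e) :
    G.sExp (insert e D) = G.sExp D - 1 := by
  have h := G.two_mul_sExp D
  have h' := G.two_mul_sExp (insert e D)
  have hE := numEdgesDel_insert he
  have hF := facesDel_insert_add_one he hc
  omega

theorem sExp_univ : G.sExp Finset.univ = 0 := by
  have h := G.two_mul_sExp Finset.univ
  rw [facesDel_univ, numEdgesDel_univ] at h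
  omega

theorem sExp_nonneg (D : Finset G.EdgeSet) : 0 ≤ G.sExp D :=
  G.sExp_univ ▸ G.sExp_antitone (Finset.subset_univ D)

theorem sExp_lt_sExp_empty (hG : ∀ e, ¬ G.IsColoop e) (hD : D.Nonempty) :
    G.sExp D < G.sExp ∅ := by
  obtain ⟨e, he⟩ := hD
  calc G.sExp D ≤ G.sExp {e} := G.sExp_antitone (Finset.singleton_subset_iff.2 he)
    _ < G.sExp ∅ := by
      rw [← Finset.insert_empty, G.sExp_insert_of_not_isColoopIn (Finset.notMem_empty e) (hG e)]
      omega

theorem sPoly_eq_sum : G.SPoly = ∑ D, (-1 : ℚ[X]) ^ D.card * X ^ (G.sExp D).toNat := rfl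

theorem sPoly_eq_X_pow_add_sum : G.SPoly = X ^ (G.sExp ∅).toNat +
    ∑ D ∈ Finset.univ.erase ∅, (-1 : ℚ[X]) ^ D.card * X ^ (G.sExp D).toNat := by
  rw [sPoly_eq_sum, ← Finset.add_sum_erase _ _ (Finset.mem_univ ∅), Finset.card_empty, pow_zero,
    one_mul]

end RibbonGraph

/-- For a virtual graph `G`, `deg S_G(Q) ≤ b₁(G) − g(G)`; if `G` has no coloops
then equality holds and `S_G(Q)` is monic. -/
theorem stmt2 (G : RibbonGraph) :
    G.SPoly.degree ≤ (((G.b1Del ∅ - G.genusDel ∅).toNat : ℕ) : WithBot ℕ) ∧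
    ((∀ e : G.EdgeSet, ¬ G.IsColoop e) →
      G.SPoly.Monic ∧ (G.SPoly.natDegree : ℤ) = G.b1Del ∅ - G.genusDel ∅) := by
  change G.SPoly.degree ≤ ((G.sExp ∅).toNat : WithBot ℕ) ∧
    ((∀ e, ¬ G.IsColoop e) → G.SPoly.Monic ∧ (G.SPoly.natDegree : ℤ) = G.sExp ∅)
  refine ⟨G.sPoly_eq_sum ▸ degree_sum_neg_one_pow_mul_X_pow_le _ _ _ fun D _ =>
    Int.toNat_le_toNat (G.sExp_antitone (Finset.empty_subset D)), fun hG => ?_⟩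
  -- only the empty state reaches the top exponent
  have hrest := degree_sum_neg_one_pow_mul_X_pow_lt (R := ℚ) (Finset.univ.erase ∅) Finset.card
    (fun D => (G.sExp D).toNat) (m := (G.sExp ∅).toNat) fun D hD => by
      have := G.sExp_lt_sExp_empty hG (Finset.nonempty_of_ne_empty (Finset.ne_of_mem_erase hD))
      have := G.sExp_nonneg D
      omega
  rw [G.sPoly_eq_X_pow_add_sum, natDegree_add_eq_left_of_degree_lt (by rwa [degree_X_pow]),
    natDegree_X_pow, Int.toNat_of_nonneg (G.sExp_nonneg ∅)]
  exact ⟨monic_X_pow_add hrest, rfl⟩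
end
end

section
/- For every finite graph G, the flow polynomial evaluated at Q = 1 is zero (when G has at least one edge); more generally, the renormalized polynomial f_G(x) = (−1)^{b_1(G)} F_G(1−x) of a bridgeless graph G is a polynomial of degree b_1(G) with nonnegative integer coefficients. -/
/-!
Deletion–contraction. Expressing `b₁(G − D)` through component counts, an edge `e` of `G`
splits the subsets `D` into pairs `D`, `D ∪ {e}` with `D ⊆ E ∖ {e}`, which gives
`F_G = (Q − 1) F_{G−e}` for a loop, `F_G = F_{G/e} − F_{G−e}` otherwise, and
`F_{G/e} = F_{G−e}` for a bridge. For `f_G` these read `f_G = x f_{G−e}`, `f_G = 0` and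
`f_G = f_{G/e} + f_{G−e}`, so induction on the number of edges gives natural coefficients and
`deg f_G ≤ b₁(G)`. Since `b₁(G/e) = b₁(G)`, `b₁(G − e) = b₁(G) − 1` for a non-bridge, and
contracting a non-loop or deleting a loop creates no bridge, the coefficient of `x^{b₁(G)}`
stays nonzero for bridgeless `G`. Finally `F_G(1) = Σ_T (−1)^{|T|} = 0` once `E ≠ ∅`.
-/

open Polynomial

noncomputable section
open scoped Classical

/-- A finite multigraph, with an (arbitrary) orientation of each edge recorded by
`ends e = (tail, head)`. -/
structure Multigraph where
  V : Type
  E : Type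
  fintypeV : Fintype V
  fintypeE : Fintype E
  ends : E → V × V

namespace Multigraph

variable (G : Multigraph)

instance : Fintype G.V := G.fintypeV
instance : Fintype G.E := G.fintypeE

/-- Adjacency in the deletion `G − D` (`D` a set of deleted edges). -/
def step (D : Finset G.E) (u v : G.V) : Prop :=
  ∃ e, e ∉ D ∧ (G.ends e = (u, v) ∨ G.ends e = (v, u))

/-- `b₀(G − D)`: the number of connected components of the graph obtained by
deleting the edges in `D` (keeping all vertices). -/
def b0Del (D : Finset G.E) : ℕ :=
  Nat.card (Quotient (Setoid.mk _ (Relation.EqvGen.is_equivalence (G.step D))))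

/-- `b₁(G − D)`: the cycle rank `|E ∖ D| − |V| + b₀(G − D)` of the deletion. -/
def b1Del (D : Finset G.E) : ℤ :=
  ((Fintype.card G.E - D.card : ℕ) : ℤ) - (Fintype.card G.V : ℤ) + (G.b0Del D : ℤ)

/-- The flow polynomial `F_G(Q) = Σ_{T⊆E} (−1)^{|T|} Q^{b₁(G−T)}`. -/
def FPoly : Polynomial ℚ :=
  ∑ D : Finset G.E, (-1 : Polynomial ℚ) ^ D.card * X ^ (G.b1Del D).toNat

/-- A bridge: an edge whose deletion increases the number of connected components. -/
def IsBridge (e : G.E) : Prop := G.b0Del ∅ < G.b0Del {e}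

/-- The degree of a vertex (loops count twice). -/
def deg (v : G.V) : ℕ :=
  ∑ e : G.E, ((if (G.ends e).1 = v then 1 else 0) + (if (G.ends e).2 = v then 1 else 0))

end Multigraph

open Relation Finset

section Components

variable {V : Type}

def addPair (R : V → V → Prop) (a b : V) : V → V → Prop := fun x y => R x y ∨ x = a ∧ y = b

theorem eqvGen_addPair_iff {R : V → V → Prop} {a b u v : V} :
    EqvGen (addPair R a b) u v ↔
      EqvGen R u v ∨ EqvGen R u a ∧ EqvGen R b v ∨ EqvGen R u b ∧ EqvGen R a v := by
  have hR := EqvGen.is_equivalence R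
  constructor
  · intro h
    induction h with
    | rel x y hxy =>
      rcases hxy with h | ⟨rfl, rfl⟩
      · exact .inl (.rel _ _ h)
      · exact .inr (.inl ⟨hR.refl _, hR.refl _⟩)
    | refl x => exact .inl (hR.refl x)
    | symm x y _ ih => grind [hR.symm]
    | trans x y z _ _ ih1 ih2 => grind [hR.symm, hR.trans]
  · have hle : ∀ x y, EqvGen R x y → EqvGen (addPair R a b) x y :=
      EqvGen.mono fun _ _ h => Or.inl h
    have hab : EqvGen (addPair R a b) a b := .rel _ _ (.inr ⟨rfl, rfl⟩)
    rintro (h | ⟨h₁, h₂⟩ | ⟨h₁, h₂⟩)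
    · exact hle _ _ h
    · exact (hle _ _ h₁).trans _ _ _ (hab.trans _ _ _ (hle _ _ h₂))
    · exact (hle _ _ h₁).trans _ _ _ (hab.symm.trans _ _ _ (hle _ _ h₂))

def numComponents (R : V → V → Prop) : ℕ := Nat.card (Quotient (EqvGen.setoid R))

theorem numComponents_congr {R S : V → V → Prop} (hRS : ∀ x y, R x y → EqvGen S x y)
    (hSR : ∀ x y, S x y → EqvGen R x y) : numComponents R = numComponents S := by
  rw [numComponents, numComponents,
    le_antisymm (Setoid.eqvGen_le (s := EqvGen.setoid S) hRS) (Setoid.eqvGen_le hSR)]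

theorem numComponents_addPair_of_eqvGen {R : V → V → Prop} {a b : V} (h : EqvGen R a b) :
    numComponents (addPair R a b) = numComponents R :=
  numComponents_congr
    (fun _ _ => Or.rec (EqvGen.rel _ _) fun ⟨hx, hy⟩ => hx ▸ hy ▸ h)
    (fun _ _ h => .rel _ _ (.inl h))

theorem numComponents_addPair_of_not_eqvGen [Finite V] {R : V → V → Prop} {a b : V}
    (h : ¬ EqvGen R a b) : numComponents R = numComponents (addPair R a b) + 1 := by
  let s := EqvGen.setoid R
  let t := EqvGen.setoid (addPair R a b)
  -- the classes of `addPair R a b` are those of `R` other than that of `b`, which merges into `a`'s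
  let φ : {z : Quotient s // z ≠ ⟦b⟧} → Quotient t :=
    fun z => Quotient.lift (fun v => (⟦v⟧ : Quotient t))
      (fun _ _ hxy => Quotient.sound (eqvGen_addPair_iff.2 (.inl (by exact hxy)))) z.1
  have hφ : Function.Bijective φ := by
    constructor
    · rintro ⟨z, hz⟩ ⟨w, hw⟩ hzw
      induction z using Quotient.inductionOn
      induction w using Quotient.inductionOn
      rcases eqvGen_addPair_iff.1 (Quotient.exact hzw) with h' | ⟨-, h'⟩ | ⟨h', -⟩
      · exact Subtype.ext (Quotient.sound h')
      · exact absurd (Quotient.sound h'.symm) hw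
      · exact absurd (Quotient.sound h') hz
    · intro q
      induction q using Quotient.inductionOn with | h u => ?_
      by_cases hub : EqvGen R u b
      · refine ⟨⟨⟦a⟧, fun hab => h (Quotient.exact hab)⟩, Quotient.sound ?_⟩
        exact eqvGen_addPair_iff.2 (.inr (.inl ⟨.refl _, hub.symm⟩))
      · exact ⟨⟨⟦u⟧, fun hub' => hub (Quotient.exact hub')⟩, rfl⟩
  rw [numComponents, numComponents, ← Nat.card_congr (Equiv.ofBijective φ hφ),
    ← Nat.card_congr (Equiv.optionSubtypeNe (⟦b⟧ : Quotient s)), Finite.card_option]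

theorem numComponents_of_forall_not {R : V → V → Prop} (h : ∀ x y, ¬ R x y) :
    numComponents R = Nat.card V := by
  have : EqvGen.setoid R = ⊥ := le_bot_iff.1 (Setoid.eqvGen_le fun x y hxy => (h x y hxy).elim)
  rw [numComponents, this, Nat.card_congr Setoid.quotientBotEquiv]

theorem eq_of_eqvGen_of_isolated {R : V → V → Prop} {a b : V}
    (hb : ∀ x y, R x y → x ≠ b ∧ y ≠ b) (h : EqvGen R a b) : a = b := by
  have := Setoid.eqvGen_le (s := Setoid.ker (· = b)) (fun x y hxy => ?_) h
  · simpa using this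
  · simp [(hb x y hxy).1, (hb x y hxy).2]

end Components

namespace Multigraph

variable (G : Multigraph)

def IsLoop (e : G.E) : Prop := (G.ends e).1 = (G.ends e).2

variable {G} {e : G.E} {D : Finset G.E}

theorem eqvGen_of_step {S : G.V → G.V → Prop}
    (h : ∀ f ∉ D, EqvGen S (G.ends f).1 (G.ends f).2) {u v : G.V} (huv : G.step D u v) :
    EqvGen S u v := by
  obtain ⟨f, hf, hends | hends⟩ := huv
  · simpa [hends] using h f hf
  · simpa [hends] using (h f hf).symm

theorem step_anti {D' : Finset G.E} (h : D ⊆ D') {u v : G.V} (huv : G.step D' u v) :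
    G.step D u v := by
  obtain ⟨f, hf, hends⟩ := huv
  exact ⟨f, fun hfD => hf (h hfD), hends⟩

variable (G) in
theorem b0Del_eq_numComponents (D : Finset G.E) : G.b0Del D = numComponents (G.step D) := rfl

variable (G) in
theorem b1Del_eq (D : Finset G.E) :
    G.b1Del D = Fintype.card G.E - D.card - Fintype.card G.V + G.b0Del D := by
  rw [b1Del, Nat.cast_sub (card_le_univ D)]

theorem b0Del_eq_numComponents_addPair (he : e ∉ D) :
    G.b0Del D = numComponents (addPair (G.step (insert e D)) (G.ends e).1 (G.ends e).2) := by
  refine numComponents_congr (fun _ _ => eqvGen_of_step fun f hf => ?_)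
    (fun _ _ => Or.rec (eqvGen_of_step fun f hf => ?_) fun ⟨hx, hy⟩ => hx ▸ hy ▸ ?_)
  · by_cases hfe : f = e
    · exact hfe ▸ .rel _ _ (.inr ⟨rfl, rfl⟩)
    · exact .rel _ _ (.inl ⟨f, by simp [hfe, hf], .inl rfl⟩)
  · exact .rel _ _ ⟨f, fun hfD => hf (mem_insert_of_mem hfD), .inl rfl⟩
  · exact .rel _ _ ⟨e, he, .inl rfl⟩

theorem b0Del_insert_of_eqvGen (he : e ∉ D)
    (h : EqvGen (G.step (insert e D)) (G.ends e).1 (G.ends e).2) :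
    G.b0Del (insert e D) = G.b0Del D := by
  rw [b0Del_eq_numComponents_addPair he, numComponents_addPair_of_eqvGen h]
  rfl

theorem b0Del_insert_of_not_eqvGen (he : e ∉ D)
    (h : ¬ EqvGen (G.step (insert e D)) (G.ends e).1 (G.ends e).2) :
    G.b0Del (insert e D) = G.b0Del D + 1 := by
  rw [b0Del_eq_numComponents_addPair he, ← numComponents_addPair_of_not_eqvGen h]
  rfl

theorem isBridge_iff_not_eqvGen :
    G.IsBridge e ↔ ¬ EqvGen (G.step {e}) (G.ends e).1 (G.ends e).2 := by
  have he : e ∉ (∅ : Finset G.E) := notMem_empty e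
  by_cases h : EqvGen (G.step {e}) (G.ends e).1 (G.ends e).2
  · simp only [IsBridge, h, not_true_eq_false, iff_false, not_lt]
    exact (b0Del_insert_of_eqvGen he h).le
  · simp only [IsBridge, h, not_false_eq_true, iff_true]
    exact (b0Del_insert_of_not_eqvGen he h).symm ▸ Nat.lt_succ_self _

theorem b1Del_insert_add_one_of_eqvGen (he : e ∉ D)
    (h : EqvGen (G.step (insert e D)) (G.ends e).1 (G.ends e).2) :
    G.b1Del (insert e D) + 1 = G.b1Del D := by
  rw [b1Del_eq, b1Del_eq, card_insert_of_notMem he, b0Del_insert_of_eqvGen he h]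
  push_cast
  ring

theorem b1Del_insert_of_not_eqvGen (he : e ∉ D)
    (h : ¬ EqvGen (G.step (insert e D)) (G.ends e).1 (G.ends e).2) :
    G.b1Del (insert e D) = G.b1Del D := by
  rw [b1Del_eq, b1Del_eq, card_insert_of_notMem he, b0Del_insert_of_not_eqvGen he h]
  push_cast
  ring

theorem b1Del_insert_le (e : G.E) (D : Finset G.E) : G.b1Del (insert e D) ≤ G.b1Del D := by
  by_cases he : e ∈ D
  · rw [insert_eq_of_mem he]
  by_cases h : EqvGen (G.step (insert e D)) (G.ends e).1 (G.ends e).2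
  · linarith [b1Del_insert_add_one_of_eqvGen he h]
  · exact (b1Del_insert_of_not_eqvGen he h).le

theorem b1Del_insert_add_one_of_isLoop (hl : G.IsLoop e) (he : e ∉ D) :
    G.b1Del (insert e D) + 1 = G.b1Del D :=
  b1Del_insert_add_one_of_eqvGen he (hl ▸ .refl _)

theorem b1Del_insert_of_isBridge (hb : G.IsBridge e) (he : e ∉ D) :
    G.b1Del (insert e D) = G.b1Del D :=
  b1Del_insert_of_not_eqvGen he fun h => isBridge_iff_not_eqvGen.1 hb <|
    EqvGen.mono (fun _ _ => step_anti (singleton_subset_iff.2 (mem_insert_self e D))) _ _ h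

theorem b1Del_singleton_add_one (hb : ¬ G.IsBridge e) : G.b1Del {e} + 1 = G.b1Del ∅ :=
  b1Del_insert_add_one_of_eqvGen (notMem_empty e) (not_not.1 (isBridge_iff_not_eqvGen.not.1 hb))

theorem isBridge_iff_b1Del : G.IsBridge e ↔ G.b1Del {e} = G.b1Del ∅ := by
  by_cases hb : G.IsBridge e
  · exact iff_of_true hb <|
      b1Del_insert_of_not_eqvGen (notMem_empty e) (isBridge_iff_not_eqvGen.1 hb)
  · have := b1Del_singleton_add_one hb
    exact iff_of_false hb (by omega)

variable (G) in
theorem b1Del_univ : G.b1Del univ = 0 := by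
  have hb0 : G.b0Del univ = Fintype.card G.V := by
    rw [← Nat.card_eq_fintype_card]
    exact numComponents_of_forall_not fun _ _ ⟨f, hf, _⟩ => hf (mem_univ f)
  simp [b1Del_eq, hb0]

variable (G) in
theorem b1Del_nonneg (D : Finset G.E) : 0 ≤ G.b1Del D := by
  suffices h : ∀ A : Finset G.E, G.b1Del (A ∪ D) ≤ G.b1Del D by
    simpa [union_eq_left.2 (subset_univ D), b1Del_univ] using h univ
  intro A
  induction A using Finset.induction_on with
  | empty => simp
  | insert a A _ ih => rw [insert_union]; exact (b1Del_insert_le a _).trans ih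

variable (G) in
@[reducible] def del (e : G.E) : Multigraph where
  V := G.V
  E := {f : G.E // f ≠ e}
  fintypeV := G.fintypeV
  fintypeE := inferInstance
  ends f := G.ends f.1

variable (G) in
def mergeHead (e : G.E) (v : G.V) : G.V := if v = (G.ends e).2 then (G.ends e).1 else v

variable (G) in
/-- The head of `e` is merged into its tail and stays behind as an isolated vertex. -/
@[reducible] def con (e : G.E) : Multigraph where
  V := G.V
  E := {f : G.E // f ≠ e}
  fintypeV := G.fintypeV
  fintypeE := inferInstance
  ends f := (G.mergeHead e (G.ends f.1).1, G.mergeHead e (G.ends f.1).2)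

variable (G) in
def liftEdges (e : G.E) (D : Finset {f : G.E // f ≠ e}) : Finset G.E :=
  D.map (Function.Embedding.subtype _)

theorem mem_liftEdges {D : Finset {f : G.E // f ≠ e}} {f : G.E} :
    f ∈ G.liftEdges e D ↔ ∃ h : f ≠ e, ⟨f, h⟩ ∈ D := by
  simp [liftEdges]

theorem notMem_liftEdges (D : Finset {f : G.E // f ≠ e}) : e ∉ G.liftEdges e D := by
  simp [mem_liftEdges]

theorem card_liftEdges (D : Finset {f : G.E // f ≠ e}) : (G.liftEdges e D).card = D.card :=
  card_map _

variable (G) in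
theorem card_E_del (e : G.E) : Fintype.card (G.del e).E + 1 = Fintype.card G.E := by
  simpa [add_comm] using Fintype.card_congr (Equiv.optionSubtypeNe e)

theorem step_del (D : Finset (G.del e).E) :
    (G.del e).step D = G.step (insert e (G.liftEdges e D)) := by
  ext u v
  constructor
  · rintro ⟨f, hf, hends⟩
    exact ⟨f, by simpa [mem_liftEdges, f.2] using hf, hends⟩
  · rintro ⟨f, hf, hends⟩
    simp only [mem_insert, mem_liftEdges, not_or, not_exists] at hf
    exact ⟨⟨f, hf.1⟩, hf.2 hf.1, hends⟩

theorem b1Del_del (D : Finset (G.del e).E) :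
    (G.del e).b1Del D = G.b1Del (insert e (G.liftEdges e D)) := by
  have hE : (Fintype.card (G.del e).E : ℤ) + 1 = Fintype.card G.E := mod_cast G.card_E_del e
  rw [b1Del_eq, b1Del_eq, b0Del_eq_numComponents, step_del, ← b0Del_eq_numComponents,
    card_insert_of_notMem (notMem_liftEdges D), card_liftEdges]
  push_cast
  linarith

theorem eqvGen_mergeHead {T : G.V → G.V → Prop} (h : EqvGen T (G.ends e).1 (G.ends e).2)
    (w : G.V) : EqvGen T w (G.mergeHead e w) := by
  unfold mergeHead
  split_ifs with hw
  · exact hw ▸ h.symm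
  · exact .refl _

theorem mergeHead_ne (hnl : ¬ G.IsLoop e) (v : G.V) : G.mergeHead e v ≠ (G.ends e).2 := by
  unfold mergeHead
  split_ifs with hv
  · exact hnl
  · exact hv

theorem b0Del_con (hnl : ¬ G.IsLoop e) (D : Finset (G.con e).E) :
    (G.con e).b0Del D = G.b0Del (G.liftEdges e D) + 1 := by
  set S := addPair ((G.con e).step D) (G.ends e).1 (G.ends e).2
  have hS : EqvGen S (G.ends e).1 (G.ends e).2 := .rel _ _ (.inr ⟨rfl, rfl⟩)
  have he : EqvGen (G.step (G.liftEdges e D)) (G.ends e).1 (G.ends e).2 :=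
    .rel _ _ ⟨e, notMem_liftEdges D, .inl rfl⟩
  have hcomp : G.b0Del (G.liftEdges e D) = numComponents S := by
    refine numComponents_congr (fun _ _ => eqvGen_of_step fun f hf => ?_)
      (fun _ _ => Or.rec (eqvGen_of_step fun f hf => ?_) fun ⟨hx, hy⟩ => hx ▸ hy ▸ he)
    · by_cases hfe : f = e
      · exact hfe ▸ hS
      · have hfD : (⟨f, hfe⟩ : (G.con e).E) ∉ D := fun h => hf (mem_liftEdges.2 ⟨hfe, h⟩)
        exact ((eqvGen_mergeHead (G := G) hS _).trans _ _ _
          (.rel _ _ (.inl ⟨_, hfD, .inl rfl⟩))).trans _ _ _ (eqvGen_mergeHead (G := G) hS _).symm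
    · have hf' : f.1 ∉ G.liftEdges e D := fun h => hf (mem_liftEdges.1 h).2
      exact ((eqvGen_mergeHead he _).symm.trans _ _ _ (.rel _ _ ⟨f.1, hf', .inl rfl⟩)).trans
        _ _ _ (eqvGen_mergeHead he _)
  have hiso : ∀ x y, (G.con e).step D x y → x ≠ (G.ends e).2 ∧ y ≠ (G.ends e).2 := by
    rintro x y ⟨f, -, hends | hends⟩ <;> obtain ⟨rfl, rfl⟩ := Prod.ext_iff.1 hends <;>
      exact ⟨mergeHead_ne hnl _, mergeHead_ne hnl _⟩
  rw [hcomp, b0Del_eq_numComponents,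
    numComponents_addPair_of_not_eqvGen fun h => hnl (eq_of_eqvGen_of_isolated hiso h)]

theorem b1Del_con (hnl : ¬ G.IsLoop e) (D : Finset (G.con e).E) :
    (G.con e).b1Del D = G.b1Del (G.liftEdges e D) := by
  have hE : (Fintype.card (G.con e).E : ℤ) + 1 = Fintype.card G.E := mod_cast G.card_E_del e
  rw [b1Del_eq, b1Del_eq, b0Del_con hnl, card_liftEdges]
  push_cast
  linarith

theorem sum_powerset_erase_eq_sum_liftEdges {M : Type*} [AddCommMonoid M] (e : G.E)
    (g : Finset G.E → M) :
    ∑ t ∈ (univ.erase e).powerset, g t = ∑ D : Finset {f : G.E // f ≠ e}, g (G.liftEdges e D) := by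
  refine sum_nbij' (fun t => t.subtype (· ≠ e)) (G.liftEdges e) (by simp) ?_ ?_ ?_ ?_
  · intro D _
    rw [mem_powerset]
    intro f hf
    grind [mem_liftEdges]
  · intro t ht
    rw [mem_powerset] at ht
    ext f
    grind [mem_liftEdges]
  · intro D _
    ext f
    simp [mem_liftEdges, f.2]
  · intro t ht
    rw [mem_powerset] at ht
    congr 1
    ext f
    grind [mem_liftEdges]

theorem sum_finset_eq_sum_liftEdges {M : Type*} [AddCommMonoid M] (e : G.E)
    (g : Finset G.E → M) :
    ∑ D, g D = ∑ D : Finset {f : G.E // f ≠ e},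
      (g (G.liftEdges e D) + g (insert e (G.liftEdges e D))) := by
  rw [← powerset_univ, ← insert_erase (mem_univ e), sum_powerset_insert (notMem_erase e _),
    sum_powerset_erase_eq_sum_liftEdges,
    sum_powerset_erase_eq_sum_liftEdges (g := (g <| insert e ·)),
    ← sum_add_distrib]

theorem FPoly_eval_one [Nonempty G.E] : G.FPoly.eval 1 = 0 := by
  rw [FPoly, eval_finsetSum]
  simp only [eval_mul, eval_pow, eval_neg, eval_one, eval_X, one_pow, mul_one]
  simpa [zero_pow Fintype.card_ne_zero] using Fintype.sum_pow_mul_eq_add_pow G.E (-1 : ℚ) 1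

theorem FPoly_eq_sum_liftEdges (e : G.E) :
    G.FPoly = ∑ D : Finset {f : G.E // f ≠ e}, (-1) ^ D.card *
      (X ^ (G.b1Del (G.liftEdges e D)).toNat -
        X ^ (G.b1Del (insert e (G.liftEdges e D))).toNat) := by
  rw [FPoly, sum_finset_eq_sum_liftEdges e]
  refine sum_congr rfl fun D _ => ?_
  rw [card_insert_of_notMem (notMem_liftEdges D), card_liftEdges, pow_succ]
  ring

theorem FPoly_of_isLoop (hl : G.IsLoop e) : G.FPoly = (X - 1) * (G.del e).FPoly := by
  rw [FPoly_eq_sum_liftEdges e, FPoly, mul_sum]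
  refine sum_congr rfl fun D _ => ?_
  have h := b1Del_insert_add_one_of_isLoop hl (notMem_liftEdges D)
  have := G.b1Del_nonneg (insert e (G.liftEdges e D))
  rw [b1Del_del, show (G.b1Del (G.liftEdges e D)).toNat =
    (G.b1Del (insert e (G.liftEdges e D))).toNat + 1 by omega]
  ring

theorem FPoly_eq_con_sub_del (hnl : ¬ G.IsLoop e) :
    G.FPoly = (G.con e).FPoly - (G.del e).FPoly := by
  rw [FPoly_eq_sum_liftEdges e, FPoly, FPoly, ← sum_sub_distrib]
  refine sum_congr rfl fun D _ => ?_
  rw [b1Del_con hnl, b1Del_del]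
  ring

theorem FPoly_con_eq_del_of_isBridge (hnl : ¬ G.IsLoop e) (hb : G.IsBridge e) :
    (G.con e).FPoly = (G.del e).FPoly := by
  refine sum_congr rfl fun D _ => ?_
  rw [b1Del_con hnl, b1Del_del, b1Del_insert_of_isBridge hb (notMem_liftEdges D)]

theorem liftEdges_empty (e : G.E) : G.liftEdges e ∅ = ∅ := rfl

theorem liftEdges_singleton (f : {f : G.E // f ≠ e}) : G.liftEdges e {f} = {f.1} := rfl

theorem not_isBridge_of_isLoop (hl : G.IsLoop e) : ¬ G.IsBridge e := by
  rw [isBridge_iff_not_eqvGen, not_not]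
  exact hl ▸ .refl _

theorem toNat_b1Del_eq_del_add_one (hb : ¬ G.IsBridge e) :
    (G.b1Del ∅).toNat = ((G.del e).b1Del ∅).toNat + 1 := by
  have h : (G.del e).b1Del ∅ + 1 = G.b1Del ∅ := by
    rw [b1Del_del, liftEdges_empty, insert_empty, b1Del_singleton_add_one hb]
  have := (G.del e).b1Del_nonneg ∅
  omega

theorem b1Del_con_empty (hnl : ¬ G.IsLoop e) : (G.con e).b1Del ∅ = G.b1Del ∅ := by
  rw [b1Del_con hnl, liftEdges_empty]

theorem isBridge_del_iff_of_isLoop (hl : G.IsLoop e) (f : (G.del e).E) :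
    (G.del e).IsBridge f ↔ G.IsBridge f := by
  rw [isBridge_iff_b1Del, isBridge_iff_b1Del, b1Del_del, b1Del_del, liftEdges_singleton,
    liftEdges_empty]
  have h₁ := b1Del_insert_add_one_of_isLoop hl (D := {f.1}) (by simpa using f.2.symm)
  have h₂ := b1Del_insert_add_one_of_isLoop hl (D := ∅) (notMem_empty e)
  omega

theorem isBridge_con_iff (hnl : ¬ G.IsLoop e) (f : (G.con e).E) :
    (G.con e).IsBridge f ↔ G.IsBridge f := by
  rw [isBridge_iff_b1Del, isBridge_iff_b1Del, b1Del_con hnl, b1Del_con hnl, liftEdges_singleton,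
    liftEdges_empty]

variable (G) in
def renormFPoly : ℚ[X] := (-1) ^ (G.b1Del ∅).toNat * G.FPoly.comp (1 - X)

theorem renormFPoly_of_isEmpty [IsEmpty G.E] : G.renormFPoly = 1 := by
  have hb1 : G.b1Del ∅ = 0 := by rw [← univ_eq_empty, b1Del_univ]
  rw [renormFPoly, FPoly, Fintype.sum_subsingleton _ ∅, hb1]
  simp

theorem renormFPoly_of_isLoop (hl : G.IsLoop e) : G.renormFPoly = X * (G.del e).renormFPoly := by
  rw [renormFPoly, renormFPoly, FPoly_of_isLoop hl, mul_comp, sub_comp, X_comp, one_comp,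
    toNat_b1Del_eq_del_add_one (not_isBridge_of_isLoop hl)]
  ring

theorem renormFPoly_of_isBridge (hnl : ¬ G.IsLoop e) (hb : G.IsBridge e) : G.renormFPoly = 0 := by
  rw [renormFPoly, FPoly_eq_con_sub_del hnl, FPoly_con_eq_del_of_isBridge hnl hb, sub_self,
    zero_comp, mul_zero]

theorem renormFPoly_eq_con_add_del (hnl : ¬ G.IsLoop e) (hb : ¬ G.IsBridge e) :
    G.renormFPoly = (G.con e).renormFPoly + (G.del e).renormFPoly := by
  rw [renormFPoly, renormFPoly, renormFPoly, FPoly_eq_con_sub_del hnl, sub_comp,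
    b1Del_con_empty hnl, toNat_b1Del_eq_del_add_one hb]
  ring

theorem induction_on_del_con {P : Multigraph → Prop} (empty : ∀ G : Multigraph, IsEmpty G.E → P G)
    (step : ∀ (G : Multigraph) (e : G.E), P (G.del e) → P (G.con e) → P G) (G : Multigraph) :
    P G := by
  induction h : Fintype.card G.E using Nat.strong_induction_on generalizing G with
  | _ n ih =>
    cases isEmpty_or_nonempty G.E with
    | inl hE => exact empty G hE
    | inr hE =>
      obtain ⟨e⟩ := hE
      have hdel : Fintype.card (G.del e).E + 1 = Fintype.card G.E := G.card_E_del e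
      have hcon : Fintype.card (G.con e).E + 1 = Fintype.card G.E := G.card_E_del e
      exact step G e (ih _ (by omega) _ rfl) (ih _ (by omega) _ rfl)

variable (G) in
theorem renormFPoly_mem_rangeS : G.renormFPoly ∈ (mapRingHom (Nat.castRingHom ℚ)).rangeS := by
  induction G using induction_on_del_con with
  | empty G hE => rw [renormFPoly_of_isEmpty]; exact one_mem _
  | step G e hdel hcon =>
    by_cases hl : G.IsLoop e
    · rw [renormFPoly_of_isLoop hl]
      exact mul_mem ⟨X, map_X _⟩ hdel
    by_cases hb : G.IsBridge e
    · rw [renormFPoly_of_isBridge hl hb]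
      exact zero_mem _
    · rw [renormFPoly_eq_con_add_del hl hb]
      exact add_mem hcon hdel

variable (G) in
theorem natDegree_renormFPoly_le : G.renormFPoly.natDegree ≤ (G.b1Del ∅).toNat := by
  induction G using induction_on_del_con with
  | empty G hE => simp [renormFPoly_of_isEmpty]
  | step G e hdel hcon =>
    by_cases hl : G.IsLoop e
    · rw [renormFPoly_of_isLoop hl, toNat_b1Del_eq_del_add_one (not_isBridge_of_isLoop hl)]
      exact natDegree_mul_le.trans (by rw [natDegree_X]; omega)
    by_cases hb : G.IsBridge e
    · simp [renormFPoly_of_isBridge hl hb]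
    · have h := toNat_b1Del_eq_del_add_one hb
      rw [b1Del_con_empty hl] at hcon
      rw [renormFPoly_eq_con_add_del hl hb]
      exact natDegree_add_le_of_degree_le hcon (by omega)

variable (G) in
theorem coeff_renormFPoly_ne_zero (hG : ∀ e, ¬ G.IsBridge e) :
    G.renormFPoly.coeff (G.b1Del ∅).toNat ≠ 0 := by
  induction G using induction_on_del_con with
  | empty G hE => simp [renormFPoly_of_isEmpty, ← univ_eq_empty, b1Del_univ]
  | step G e hdel hcon =>
    by_cases hl : G.IsLoop e
    · rw [renormFPoly_of_isLoop hl, toNat_b1Del_eq_del_add_one (not_isBridge_of_isLoop hl),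
        coeff_X_mul]
      exact hdel fun f => (isBridge_del_iff_of_isLoop hl f).not.2 (hG f)
    · have h := toNat_b1Del_eq_del_add_one (hG e)
      have hdel_zero : (G.del e).renormFPoly.coeff (G.b1Del ∅).toNat = 0 :=
        coeff_eq_zero_of_natDegree_lt ((natDegree_renormFPoly_le _).trans_lt (by omega))
      rw [renormFPoly_eq_con_add_del hl (hG e), coeff_add, hdel_zero, add_zero,
        ← b1Del_con_empty hl]
      exact hcon fun f => (isBridge_con_iff hl f).not.2 (hG f)

end Multigraph

/-- The flow polynomial of a graph with at least one edge vanishes at `Q = 1`;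
more generally, for a bridgeless graph `G`, the renormalization
`f_G(x) = (−1)^{b₁(G)} F_G(1−x)` is a polynomial of degree `b₁(G)` with
nonnegative integer coefficients. -/
theorem stmt7 (G : Multigraph) :
    (Nonempty G.E → G.FPoly.eval 1 = 0) ∧
    ((∀ e, ¬ G.IsBridge e) →
      ((-1 : Polynomial ℚ) ^ (G.b1Del ∅).toNat * G.FPoly.comp (1 - Polynomial.X)).natDegree
          = (G.b1Del ∅).toNat ∧
      ∀ n : ℕ, ∃ m : ℕ,
        ((-1 : Polynomial ℚ) ^ (G.b1Del ∅).toNat * G.FPoly.comp (1 - Polynomial.X)).coeff n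
          = (m : ℚ)) := by
  refine ⟨fun _ => G.FPoly_eval_one, fun hG => ?_⟩
  change G.renormFPoly.natDegree = _ ∧ ∀ n : ℕ, ∃ m : ℕ, G.renormFPoly.coeff n = m
  obtain ⟨p, hp⟩ := G.renormFPoly_mem_rangeS
  refine ⟨(G.natDegree_renormFPoly_le).antisymm
    (le_natDegree_of_ne_zero (G.coeff_renormFPoly_ne_zero hG)), fun n => ⟨p.coeff n, ?_⟩⟩
  rw [← hp, coe_mapRingHom, coeff_map, eq_natCast]
end
end
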